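/- If f : ℂ → ℂ is entire, not identically zero, and z·f'(z)/f(z) → d as z → ∞ for some nonnegative integer d, then f is a polynomial of degree d; in particular f has exactly d zeros counted with multiplicity. -/

import Mathlib

/-!
Near a zero `a ≠ 0` of `f` the logarithmic derivative has a pole, so `z f'(z) / f(z)` is unbounded
there; as it tends to `d` at infinity, the zeros of `f` lie in a compact set and, being isolated,
are finitely many. Dividing them out writes `f = P * g` with `P` a polynomial and `g` entire and
zero-free. Since `z P'(z) / P(z) → deg P`, the entire function `g' / g` tends to `0` at infinity,
so it vanishes by Liouville's theorem: `g` is a nonzero constant and `deg P = d`.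
-/

open Filter Polynomial Topology Bornology Function

theorem Differentiable.eventually_codiscrete_ne_zero {f : ℂ → ℂ} (hf : Differentiable ℂ f)
    (hne : ∃ z, f z ≠ 0) : ∀ᶠ z in codiscrete ℂ, f z ≠ 0 := by
  obtain ⟨w, hw⟩ := hne
  exact (AnalyticOnNhd.eqOn_zero_or_eventually_ne_zero_of_preconnected
    (fun z _ ↦ hf.analyticAt z) isPreconnected_univ).resolve_left fun h ↦ hw (h (Set.mem_univ w))

theorem Differentiable.eventually_nhdsNE_ne_zero {f : ℂ → ℂ} (hf : Differentiable ℂ f)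
    (hne : ∃ z, f z ≠ 0) (a : ℂ) : ∀ᶠ z in 𝓝[≠] a, f z ≠ 0 := by
  have h := disjoint_principal_right.1 (mem_codiscrete.1 (hf.eventually_codiscrete_ne_zero hne) a)
  rwa [compl_compl] at h

theorem Differentiable.finite_setOf_eq_zero_of_subset_isCompact {f : ℂ → ℂ}
    (hf : Differentiable ℂ f) (hne : ∃ z, f z ≠ 0) {K : Set ℂ} (hK : IsCompact K)
    (hsub : {z | f z = 0} ⊆ K) : {z | f z = 0}.Finite :=
  (hK.finite_sdiff_of_mem_codiscreteWithin (codiscreteWithin_mono (Set.subset_univ K)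
    (hf.eventually_codiscrete_ne_zero hne))).subset fun _ hz ↦ ⟨hsub hz, not_not.2 hz⟩

theorem AnalyticAt.tendsto_mul_logDeriv_nhdsNE_cobounded {𝕜 : Type*} [NontriviallyNormedField 𝕜]
    [CompleteSpace 𝕜] [CharZero 𝕜] {f : 𝕜 → 𝕜} {a : 𝕜} (hf : AnalyticAt 𝕜 f a) (hfa : f a = 0)
    (hne : ∀ᶠ z in 𝓝[≠] a, f z ≠ 0) (ha : a ≠ 0) :
    Tendsto (fun z ↦ z * logDeriv f z) (𝓝[≠] a) (cobounded 𝕜) := by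
  have hord : meromorphicOrderAt (logDeriv f) a = -1 := by
    refine meromorphicOrderAt_logDeriv_eq_neg_one hf.meromorphicAt ?_
      ((meromorphicOrderAt_ne_top_iff_eventually_ne_zero hf.meromorphicAt).2 hne)
    simp [hf.meromorphicOrderAt_eq, hf.analyticOrderAt_eq_zero, hfa]
  apply tendsto_cobounded_of_meromorphicOrderAt_neg
  rw [show (fun z ↦ z * logDeriv f z) = id * logDeriv f from rfl,
    meromorphicOrderAt_mul_of_ne_zero analyticAt_id ha, hord]
  decide

theorem Differentiable.exists_isCompact_setOf_eq_zero_subset {f : ℂ → ℂ} (hf : Differentiable ℂ f)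
    (hne : ∃ z, f z ≠ 0) {c : ℂ} (hlim : Tendsto (fun z ↦ z * logDeriv f z)
      (cocompact ℂ ⊓ 𝓟 {z | f z ≠ 0}) (𝓝 c)) :
    ∃ K, IsCompact K ∧ {z | f z = 0} ⊆ K := by
  obtain ⟨K, hK, hKc⟩ :=
    mem_cocompact.1 <| mem_inf_principal.1 <| hlim (Metric.ball_mem_nhds c one_pos)
  -- `0` is added because at `a = 0` the factor `z` cancels the pole of `f' / f`.
  refine ⟨insert 0 K, hK.insert 0, fun a (hfa : f a = 0) ↦ ?_⟩
  by_contra haK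
  obtain ⟨ha, haK⟩ := not_or.1 haK
  have hblow := (hf.analyticAt a).tendsto_mul_logDeriv_nhdsNE_cobounded hfa
    (hf.eventually_nhdsNE_ne_zero hne a) ha
  have hfar : ∀ᶠ z in 𝓝[≠] a, z * logDeriv f z ∉ Metric.ball c 1 :=
    hblow (isBounded_def.1 Metric.isBounded_ball)
  have hnear : ∀ᶠ z in 𝓝[≠] a, z * logDeriv f z ∈ Metric.ball c 1 := by
    filter_upwards [hf.eventually_nhdsNE_ne_zero hne a, nhdsWithin_le_nhds
      (hK.isClosed.isOpen_compl.mem_nhds haK)] with z hz hzK using hKc hzK hz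
  exact (hfar.and hnear).exists.elim fun z hz ↦ hz.1 hz.2

theorem tendsto_div_sub_cobounded {𝕜 : Type*} [NormedField 𝕜] (r : 𝕜) :
    Tendsto (fun z ↦ z / (z - r)) (cobounded 𝕜) (𝓝 1) := by
  have h : Tendsto (fun z : 𝕜 ↦ (1 - r * z⁻¹)⁻¹) (cobounded 𝕜) (𝓝 (1 - r * 0)⁻¹) :=
    (tendsto_const_nhds.sub (tendsto_const_nhds.mul tendsto_inv₀_cobounded)).inv₀ (by simp)
  rw [mul_zero, sub_zero, inv_one] at h
  refine h.congr' ?_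
  filter_upwards [eventually_ne_cobounded 0, eventually_ne_cobounded r] with z hz hzr
  have : z - r ≠ 0 := sub_ne_zero.2 hzr
  field_simp

theorem Polynomial.tendsto_mul_logDeriv_eval {𝕜 : Type*} [NontriviallyNormedField 𝕜]
    [IsAlgClosed 𝕜] (P : 𝕜[X]) :
    Tendsto (fun z ↦ z * logDeriv (fun z ↦ P.eval z) z) (cobounded 𝕜) (𝓝 P.natDegree) := by
  rcases eq_or_ne P 0 with rfl | hP
  · simp [logDeriv]
  have hsum : Tendsto (fun z ↦ (P.roots.map fun r ↦ z / (z - r)).sum) (cobounded 𝕜)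
      (𝓝 (P.roots.map fun _ ↦ (1 : 𝕜)).sum) :=
    tendsto_multiset_sum _ fun r _ ↦ tendsto_div_sub_cobounded r
  rw [Multiset.map_const', Multiset.sum_replicate, nsmul_one,
    ← (IsAlgClosed.splits P).natDegree_eq_card_roots] at hsum
  refine hsum.congr' ?_
  filter_upwards [isBounded_def.1 (finite_setOfPred_isRoot hP).isBounded] with z hz
  rw [logDeriv_apply, Polynomial.deriv,
    (IsAlgClosed.splits P).eval_derivative_div_eval_of_ne_zero hz, ← Multiset.sum_map_mul_left]
  simp only [mul_one_div]

theorem Differentiable.iterate_swap_dslope {E : Type*} [NormedAddCommGroup E] [NormedSpace ℂ E]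
    [CompleteSpace E] {f : ℂ → E} (hf : Differentiable ℂ f) (a : ℂ) (n : ℕ) :
    Differentiable ℂ ((swap dslope a)^[n] f) := by
  induction n with
  | zero => exact hf
  | succ n ih =>
    rw [iterate_succ_apply', ← differentiableOn_univ]
    exact (Complex.differentiableOn_dslope Filter.univ_mem).2 ih.differentiableOn

theorem Differentiable.exists_eq_pow_mul {f : ℂ → ℂ} (hf : Differentiable ℂ f) {a : ℂ}
    (hne : ∀ᶠ z in 𝓝[≠] a, f z ≠ 0) :
    ∃ (m : ℕ) (g : ℂ → ℂ), Differentiable ℂ g ∧ g a ≠ 0 ∧ ∀ z, f z = (z - a) ^ m * g z := by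
  obtain ⟨p, hp⟩ := hf.analyticAt a
  have hp0 : p ≠ 0 := fun h ↦ (hne.and ((hp.locally_zero_iff.2 h).filter_mono nhdsWithin_le_nhds))
    |>.exists.elim fun z hz ↦ hz.1 hz.2
  exact ⟨p.order, _, hf.iterate_swap_dslope a _, hp.iterate_dslope_fslope_ne_zero hp0,
    hp.eq_pow_order_mul_iterate_dslope⟩

theorem Differentiable.exists_eq_eval_mul_of_finite {f : ℂ → ℂ} (hf : Differentiable ℂ f)
    (hfin : {z | f z = 0}.Finite) :
    ∃ (P : ℂ[X]) (g : ℂ → ℂ), Differentiable ℂ g ∧ (∀ z, g z ≠ 0) ∧ ∀ z, f z = P.eval z * g z := by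
  classical
  obtain ⟨S, hS⟩ := hfin.exists_finset_coe
  clear hfin
  induction S using Finset.induction_on generalizing f with
  | empty => exact ⟨1, f, hf, fun z hz ↦ by simpa using hS.symm.subset hz, by simp⟩
  | insert a S ha ih =>
    obtain ⟨w, hw⟩ := (insert a S).finite_toSet.exists_notMem
    obtain ⟨m, g, hg, hga, hfg⟩ :=
      hf.exists_eq_pow_mul (hf.eventually_nhdsNE_ne_zero ⟨w, fun h ↦ hw (hS ▸ h)⟩ a)
    have hgS : ↑S = {z | g z = 0} := by
      ext z
      have := Set.ext_iff.1 hS z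
      simp only [Finset.coe_insert, Set.mem_insert_iff, Finset.mem_coe, Set.mem_ofPred_eq, hfg,
        mul_eq_zero, pow_eq_zero_iff', sub_eq_zero] at this ⊢
      grind
    obtain ⟨Q, h, hh, hh0, hgQ⟩ := ih hg hgS
    exact ⟨(X - C a) ^ m * Q, h, hh, hh0, fun z ↦ by simp [hfg, hgQ, mul_assoc]⟩

theorem Differentiable.logDeriv_eq_zero_of_tendsto {g : ℂ → ℂ} (hg : Differentiable ℂ g)
    (hg0 : ∀ z, g z ≠ 0) {e : ℂ} (h : Tendsto (fun z ↦ z * logDeriv g z) (cocompact ℂ) (𝓝 e)) :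
    logDeriv g = 0 := by
  have h0 : Tendsto (logDeriv g) (cocompact ℂ) (𝓝 0) := by
    rw [← Metric.cobounded_eq_cocompact] at h ⊢
    simpa using (tendsto_inv₀_cobounded.mul h).congr' <| (eventually_ne_cobounded 0).mono
      fun z hz ↦ by simp [inv_mul_cancel_left₀ hz]
  exact (hg.deriv.div hg hg0).eq_const_of_tendsto_cocompact h0

/-- If `f` is entire, not identically zero, and `z f'(z)/f(z) → d` as `z → ∞` (over `z`
with `f z ≠ 0`) for a nonnegative integer `d`, then `f` is a polynomial of degree `d`;
in particular `f` has exactly `d` zeros counted with multiplicity. -/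
theorem stmt_13 (f : ℂ → ℂ) (hf : Differentiable ℂ f) (hne : ∃ z : ℂ, f z ≠ 0)
    (d : ℕ)
    (hlim : Tendsto (fun z : ℂ => z * (deriv f z / f z))
      (cocompact ℂ ⊓ Filter.principal {z : ℂ | f z ≠ 0}) (nhds (d : ℂ))) :
    ∃ P : ℂ[X], (∀ z : ℂ, f z = P.eval z) ∧ P.natDegree = d ∧
      Multiset.card P.roots = d := by
  obtain ⟨K, hK, hzeros⟩ := hf.exists_isCompact_setOf_eq_zero_subset hne hlim
  have hfin := hf.finite_setOf_eq_zero_of_subset_isCompact hne hK hzeros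
  have hcof : {z | f z ≠ 0} ∈ cocompact ℂ := cocompact_le_cofinite hfin.compl_mem_cofinite
  rw [inf_eq_left.2 (le_principal_iff.2 hcof)] at hlim
  obtain ⟨P, g, hg, hg0, hfPg⟩ := hf.exists_eq_eval_mul_of_finite hfin
  have hglim : Tendsto (fun z ↦ z * logDeriv g z) (cocompact ℂ) (𝓝 (d - P.natDegree)) := by
    have hP := Metric.cobounded_eq_cocompact (α := ℂ) ▸ P.tendsto_mul_logDeriv_eval
    refine (hlim.sub hP).congr' ?_
    filter_upwards [hcof] with z hz
    have hPz : P.eval z ≠ 0 := fun h ↦ hz (by simp [hfPg, h])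
    rw [show f = fun z ↦ P.eval z * g z from funext hfPg]
    rw [← logDeriv_apply, logDeriv_mul z hPz (hg0 z) P.differentiableAt (hg z)]
    ring
  have hlog := hg.logDeriv_eq_zero_of_tendsto hg0 hglim
  have hdeg : P.natDegree = d := by
    simp only [hlog, Pi.zero_apply, mul_zero, tendsto_const_nhds_iff] at hglim
    exact_mod_cast (sub_eq_zero.1 hglim.symm).symm
  have hconst (z : ℂ) : g z = g 0 := is_const_of_deriv_eq_zero hg (fun w ↦ by
    simpa [logDeriv_apply, hg0 w] using congrFun hlog w) z 0
  refine ⟨C (g 0) * P, fun z ↦ by rw [hfPg, hconst z]; simp [mul_comm], ?_, ?_⟩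
  · rw [natDegree_C_mul (hg0 0), hdeg]
  · rw [← (IsAlgClosed.splits _).natDegree_eq_card_roots, natDegree_C_mul (hg0 0), hdeg]
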